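/- For all subnormalized states ρ and σ on a finite-dimensional Hilbert space A, the purified distance P(ρ,σ) = sqrt(1 − F̄(ρ,σ)²), where F̄(ρ,σ) = F(ρ,σ) + sqrt((1−tr ρ)(1−tr σ)) is the generalized fidelity, satisfies (1/2)·‖ρ − σ‖₁ ≤ P(ρ,σ) ≤ sqrt(‖ρ − σ‖₁ + |tr ρ − tr σ|). -/

import Mathlib

open scoped Classical Kronecker ComplexOrder

noncomputable section

namespace QIT

variable {ι κ γ : Type*} [Fintype ι] [DecidableEq ι] [Fintype κ] [DecidableEq κ]
  [Fintype γ] [DecidableEq γ]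

/-- Old Mathlib `Matrix.PosSemidef.sqrt` (removed), spelled out with its Dec 2024 definition. -/
def psdSqrt {A : Matrix ι ι ℂ} (hA : A.PosSemidef) : Matrix ι ι ℂ :=
  hA.1.eigenvectorUnitary.1 * Matrix.diagonal ((↑) ∘ (√·) ∘ hA.1.eigenvalues) *
  (star hA.1.eigenvectorUnitary : Matrix ι ι ℂ)

/-- Trace norm `‖A‖₁ = tr √(AᴴA)`. -/
def traceNorm (A : Matrix ι ι ℂ) : ℝ :=
  (psdSqrt (Matrix.posSemidef_conjTranspose_mul_self A)).trace.re

/-- Matrix square root (of a PSD matrix; junk value `0` otherwise). -/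
def msqrt (A : Matrix ι ι ℂ) : Matrix ι ι ℂ :=
  if h : A.PosSemidef then psdSqrt h else 0

/-- Fidelity `F(ρ,σ) = ‖√ρ√σ‖₁`. -/
def fidelity (ρ σ : Matrix ι ι ℂ) : ℝ := traceNorm (msqrt ρ * msqrt σ)

/-- Generalized fidelity. -/
def genFid (ρ σ : Matrix ι ι ℂ) : ℝ :=
  fidelity ρ σ + Real.sqrt ((1 - ρ.trace.re) * (1 - σ.trace.re))

/-- Purified distance. -/
def purifiedDist (ρ σ : Matrix ι ι ℂ) : ℝ := Real.sqrt (1 - genFid ρ σ ^ 2)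

def IsSubnormalized (ρ : Matrix ι ι ℂ) : Prop := ρ.PosSemidef ∧ ρ.trace.re ≤ 1

def IsDensity (ρ : Matrix ι ι ℂ) : Prop := ρ.PosSemidef ∧ ρ.trace = 1

/-- Max-relative entropy `D_max(ρ‖σ) = inf {λ : 2^λ σ ≥ ρ}`. -/
def Dmax (ρ σ : Matrix ι ι ℂ) : ℝ :=
  sInf {l : ℝ | ((((2:ℝ) ^ l : ℝ) : ℂ) • σ - ρ).PosSemidef}

/-- Partial trace over the first factor. -/
def ptrace₁ (ρ : Matrix (ι × κ) (ι × κ) ℂ) : Matrix κ κ ℂ :=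
  Matrix.of fun (b b' : κ) => ∑ a, ρ (a, b) (a, b')

/-- Partial trace over the second factor. -/
def ptrace₂ (ρ : Matrix (ι × κ) (ι × κ) ℂ) : Matrix ι ι ℂ :=
  Matrix.of fun (a a' : ι) => ∑ b, ρ (a, b) (a', b)

/-- Max-information `I_max(A:B)_ρ = inf_{σ_B} D_max(ρ_{AB}‖ρ_A ⊗ σ_B)`. -/
def Imax (ρ : Matrix (ι × κ) (ι × κ) ℂ) : ℝ :=
  sInf {x : ℝ | ∃ σ : Matrix κ κ ℂ, IsDensity σ ∧ x = Dmax ρ (ptrace₂ ρ ⊗ₖ σ)}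

/-- Conditional min-entropy `H_min(A|B)_ρ = −inf_{σ_B} D_max(ρ_{AB}‖Id_A ⊗ σ_B)`. -/
def HminCond (ρ : Matrix (ι × κ) (ι × κ) ℂ) : ℝ :=
  - sInf {x : ℝ | ∃ σ : Matrix κ κ ℂ, IsDensity σ ∧ x = Dmax ρ ((1 : Matrix ι ι ℂ) ⊗ₖ σ)}

/-- Largest eigenvalue (operator norm for PSD matrices). -/
def maxEig (ρ : Matrix ι ι ℂ) : ℝ :=
  if h : ρ.IsHermitian then ⨆ i, h.eigenvalues i else 0

/-- Zero-Rényi entropy `H₀ = log rank`. -/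
def H0 (ρ : Matrix ι ι ℂ) : ℝ := Real.logb 2 ρ.rank

/-- Min-entropy `H_min = −log ‖ρ‖_∞`. -/
def Hmin (ρ : Matrix ι ι ℂ) : ℝ := - Real.logb 2 (maxEig ρ)

/-- Max-entropy `H_max = 2 log tr √ρ`. -/
def Hmax (ρ : Matrix ι ι ℂ) : ℝ := 2 * Real.logb 2 (msqrt ρ).trace.re

def smoothH0 (ε : ℝ) (ρ : Matrix ι ι ℂ) : ℝ :=
  sInf {x : ℝ | ∃ σ : Matrix ι ι ℂ, IsSubnormalized σ ∧ purifiedDist σ ρ ≤ ε ∧ x = H0 σ}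

def smoothHmax (ε : ℝ) (ρ : Matrix ι ι ℂ) : ℝ :=
  sInf {x : ℝ | ∃ σ : Matrix ι ι ℂ, IsSubnormalized σ ∧ purifiedDist σ ρ ≤ ε ∧ x = Hmax σ}

def smoothImax (ε : ℝ) (ρ : Matrix (ι × κ) (ι × κ) ℂ) : ℝ :=
  sInf {x : ℝ | ∃ σ : Matrix (ι × κ) (ι × κ) ℂ,
    IsSubnormalized σ ∧ purifiedDist σ ρ ≤ ε ∧ x = Imax σ}

/-!
Write `T = ‖ρ - σ‖₁`, `t = tr ρ - tr σ` and `D = (T + |t|) / 2`. Measuring both states with the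
projection onto the nonnegative eigenspace of `ρ - σ` and its complement, and recording the missing
weight `1 - tr` as a third outcome, yields two probability distributions at total variation distance
`D`. Since the fidelity can only grow under a measurement, their Bhattacharyya coefficient dominates
the generalized fidelity `F̄`, and the classical Fuchs–van de Graaf inequality gives
`F̄² + D² ≤ 1`, hence `T / 2 ≤ D ≤ P`. Conversely, the Powers–Størmer inequality
`‖√ρ - √σ‖₂² ≤ ‖ρ - σ‖₁` gives `F ≥ (tr ρ + tr σ - T) / 2`; together with
`√((1 - tr ρ)(1 - tr σ)) ≥ min (1 - tr ρ) (1 - tr σ)` this is `F̄ ≥ 1 - D`, so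
`P² = (1 - F̄)(1 + F̄) ≤ 2 D`.
-/

open Matrix

lemma min_le_sqrt_mul {x y : ℝ} (hx : 0 ≤ x) (hy : 0 ≤ y) : min x y ≤ √(x * y) := by
  refine Real.le_sqrt_of_sq_le ?_
  rw [sq, ← min_mul_max x y]
  exact mul_le_mul_of_nonneg_left min_le_max (le_min hx hy)

lemma sq_sum_sqrt_mul_sqrt_add_sq_le_one {κ : Type*} [Fintype κ] {p q : κ → ℝ} (hp : 0 ≤ p)
    (hq : 0 ≤ q) (hp1 : ∑ i, p i = 1) (hq1 : ∑ i, q i = 1) :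
    (∑ i, √(p i) * √(q i)) ^ 2 + ((∑ i, |p i - q i|) / 2) ^ 2 ≤ 1 := by
  set D := (∑ i, |p i - q i|) / 2
  have hmin : ∑ i, min (p i) (q i) = 1 - D := by
    have h (i : κ) : min (p i) (q i) = (p i + q i - |p i - q i|) / 2 := by
      linarith [min_add_max (p i) (q i), max_sub_min_eq_abs' (p i) (q i)]
    simp only [h, D, ← Finset.sum_div, Finset.sum_sub_distrib, Finset.sum_add_distrib, hp1, hq1]
    ring
  have hmax : ∑ i, max (p i) (q i) = 1 + D := by
    have h (i : κ) : max (p i) (q i) = (p i + q i + |p i - q i|) / 2 := by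
      linarith [min_add_max (p i) (q i), max_sub_min_eq_abs' (p i) (q i)]
    simp only [h, D, ← Finset.sum_div, Finset.sum_add_distrib, hp1, hq1]
    ring
  have hD : D ≤ 1 := by
    have : 0 ≤ ∑ i, min (p i) (q i) := Finset.sum_nonneg fun i _ => le_min (hp i) (hq i)
    linarith
  have hbound : ∑ i, √(p i) * √(q i) ≤ √(1 - D) * √(1 + D) :=
    calc ∑ i, √(p i) * √(q i) = ∑ i, √(min (p i) (q i)) * √(max (p i) (q i)) := by
          refine Finset.sum_congr rfl fun i _ => ?_
          rw [← Real.sqrt_mul (hp i), ← Real.sqrt_mul (le_min (hp i) (hq i)), min_mul_max]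
      _ ≤ √(∑ i, min (p i) (q i)) * √(∑ i, max (p i) (q i)) :=
          Real.sum_sqrt_mul_sqrt_le _ (fun i => le_min (hp i) (hq i))
            (fun i => (hp i).trans (le_max_left _ _))
      _ = √(1 - D) * √(1 + D) := by rw [hmin, hmax]
  have hD0 : 0 ≤ D := by positivity
  calc (∑ i, √(p i) * √(q i)) ^ 2 + D ^ 2 ≤ (√(1 - D) * √(1 + D)) ^ 2 + D ^ 2 := by
        gcongr
    _ = 1 := by
        rw [mul_pow, Real.sq_sqrt (by linarith), Real.sq_sqrt (by linarith)]
        ring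

section CauchySchwarz

variable {m n : Type*} [Fintype m]

lemma re_conjTranspose_mul_self_apply (A : Matrix m n ℂ) (i : n) :
    ((Aᴴ * A) i i).re = ∑ k, ‖A k i‖ ^ 2 := by
  simp only [mul_apply, conjTranspose_apply, Complex.re_sum, RCLike.star_def, mul_comm,
    Complex.mul_conj, Complex.ofReal_re, Complex.normSq_eq_norm_sq]

lemma norm_conjTranspose_mul_apply_le (A B : Matrix m n ℂ) (i j : n) :
    ‖(Aᴴ * B) i j‖ ≤ √((Aᴴ * A) i i).re * √((Bᴴ * B) j j).re := by
  let x : EuclideanSpace ℂ m := WithLp.toLp 2 fun k => A k i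
  let y : EuclideanSpace ℂ m := WithLp.toLp 2 fun k => B k j
  have hxy : inner ℂ x y = (Aᴴ * B) i j := by
    simp [x, y, PiLp.inner_apply, mul_apply, mul_comm]
  have hx : ‖x‖ = √((Aᴴ * A) i i).re := by
    rw [EuclideanSpace.norm_eq, re_conjTranspose_mul_self_apply]
  have hy : ‖y‖ = √((Bᴴ * B) j j).re := by
    rw [EuclideanSpace.norm_eq, re_conjTranspose_mul_self_apply]
  rw [← hxy, ← hx, ← hy]
  exact norm_inner_le_norm x y

lemma norm_trace_conjTranspose_mul_le [Fintype n] (A B : Matrix m n ℂ) :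
    ‖(Aᴴ * B).trace‖ ≤ √(Aᴴ * A).trace.re * √(Bᴴ * B).trace.re := by
  have hdiag (C : Matrix m n ℂ) (i : n) : 0 ≤ ((Cᴴ * C) i i).re := by
    rw [re_conjTranspose_mul_self_apply]; positivity
  calc ‖(Aᴴ * B).trace‖ ≤ ∑ i, ‖(Aᴴ * B) i i‖ := norm_sum_le _ _
    _ ≤ ∑ i, √((Aᴴ * A) i i).re * √((Bᴴ * B) i i).re :=
      Finset.sum_le_sum fun i _ => norm_conjTranspose_mul_apply_le A B i i
    _ ≤ √(∑ i, ((Aᴴ * A) i i).re) * √(∑ i, ((Bᴴ * B) i i).re) :=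
      Real.sum_sqrt_mul_sqrt_le _ (hdiag A) (hdiag B)
    _ = √(Aᴴ * A).trace.re * √(Bᴴ * B).trace.re := by simp only [trace, diag, Complex.re_sum]

end CauchySchwarz

section

variable {n : Type*} [Fintype n]

lemma re_trace_mul_nonneg_of_isStarProjection {M ρ : Matrix n n ℂ} (hM : IsStarProjection M)
    (hρ : ρ.PosSemidef) : 0 ≤ (M * ρ).trace.re := by
  have hMh : Mᴴ = M := hM.isSelfAdjoint
  have h : (M * ρ).trace = (Mᴴ * ρ * M).trace := by
    rw [hMh, trace_mul_cycle, hM.isIdempotentElem.eq]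
  rw [h]
  exact (Complex.le_def.mp (hρ.conjTranspose_mul_mul_same M).trace_nonneg).1

lemma trace_conjTranspose_mul_self_of_isStarProjection {M : Matrix n n ℂ}
    (hM : IsStarProjection M) (A : Matrix n n ℂ) :
    ((A * M)ᴴ * (A * M)).trace = (M * (Aᴴ * A)).trace := by
  have hMh : Mᴴ = M := hM.isSelfAdjoint
  rw [conjTranspose_mul, hMh, ← mul_assoc, trace_mul_cycle, ← mul_assoc, hM.isIdempotentElem.eq,
    mul_assoc]

variable [DecidableEq n]

def IsContraction (C : Matrix n n ℂ) : Prop := (1 - Cᴴ * C).PosSemidef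

lemma isContraction_of_conjTranspose_mul_self_eq_one {C : Matrix n n ℂ} (h : Cᴴ * C = 1) :
    IsContraction C := by
  rw [IsContraction, h, sub_self]
  exact .zero

lemma IsContraction.re_conjTranspose_mul_self_apply_le {C : Matrix n n ℂ} (hC : IsContraction C)
    (Y : Matrix n n ℂ) (i : n) :
    (((C * Y)ᴴ * (C * Y)) i i).re ≤ ((Yᴴ * Y) i i).re := by
  have hdefect : (Yᴴ * (1 - Cᴴ * C) * Y) i i = (Yᴴ * Y) i i - ((C * Y)ᴴ * (C * Y)) i i := by
    rw [conjTranspose_mul, ← Matrix.sub_apply]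
    noncomm_ring
  have := (Complex.le_def.mp ((hC.conjTranspose_mul_mul_same Y).diag_nonneg (i := i))).1
  rw [hdefect] at this
  simpa using this

lemma IsContraction.re_trace_conjTranspose_mul_self_le {C : Matrix n n ℂ} (hC : IsContraction C)
    (Y : Matrix n n ℂ) :
    ((C * Y)ᴴ * (C * Y)).trace.re ≤ (Yᴴ * Y).trace.re := by
  simp only [trace, diag, Complex.re_sum]
  exact Finset.sum_le_sum fun i _ => hC.re_conjTranspose_mul_self_apply_le Y i

section SpectralMatrix

variable {H : Matrix n n ℂ} (hH : H.IsHermitian)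

def spectralMatrix (g : n → ℝ) : Matrix n n ℂ :=
  Unitary.conjStarAlgAut ℂ _ hH.eigenvectorUnitary (diagonal (RCLike.ofReal ∘ g))

lemma spectralMatrix_eigenvalues : spectralMatrix hH hH.eigenvalues = H :=
  hH.spectral_theorem.symm

lemma spectralMatrix_one : spectralMatrix hH 1 = 1 := by
  simp [spectralMatrix]

lemma spectralMatrix_mul (f g : n → ℝ) :
    spectralMatrix hH f * spectralMatrix hH g = spectralMatrix hH (f * g) := by
  simp only [spectralMatrix, ← map_mul, diagonal_mul_diagonal]
  congr 2
  ext i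
  simp

lemma spectralMatrix_sub (f g : n → ℝ) :
    spectralMatrix hH f - spectralMatrix hH g = spectralMatrix hH (f - g) := by
  simp only [spectralMatrix, ← map_sub, diagonal_sub]
  congr 2
  ext i
  simp

lemma isHermitian_spectralMatrix (g : n → ℝ) : (spectralMatrix hH g).IsHermitian := by
  rw [IsHermitian, spectralMatrix, ← star_eq_conjTranspose, ← map_star, star_eq_conjTranspose,
    diagonal_conjTranspose]
  congr 2
  ext i
  simp

lemma posSemidef_spectralMatrix {g : n → ℝ} (hg : 0 ≤ g) : (spectralMatrix hH g).PosSemidef := by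
  rw [spectralMatrix, Unitary.conjStarAlgAut_apply]
  exact (PosSemidef.diagonal fun i => by simpa using hg i).mul_mul_conjTranspose_same _

lemma trace_spectralMatrix (g : n → ℝ) : (spectralMatrix hH g).trace = ∑ i, (g i : ℂ) := by
  simp [spectralMatrix, Unitary.conjStarAlgAut_apply, trace_mul_cycle, trace_diagonal]

lemma trace_spectralMatrix_mul (g : n → ℝ) (K : Matrix n n ℂ) :
    (spectralMatrix hH g * K).trace =
      ∑ i, (g i : ℂ) * (star (hH.eigenvectorUnitary : Matrix n n ℂ) * K *
        (hH.eigenvectorUnitary : Matrix n n ℂ)) i i := by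
  rw [spectralMatrix, Unitary.conjStarAlgAut_apply, mul_assoc, trace_mul_comm, ← mul_assoc,
    trace_mul_comm, ← mul_assoc, ← mul_assoc]
  simp [trace, mul_assoc]

end SpectralMatrix

lemma psdSqrt_eq_spectralMatrix {A : Matrix n n ℂ} (hA : A.PosSemidef) :
    psdSqrt hA = spectralMatrix hA.1 fun i => √(hA.1.eigenvalues i) :=
  rfl

lemma posSemidef_psdSqrt {A : Matrix n n ℂ} (hA : A.PosSemidef) : (psdSqrt hA).PosSemidef :=
  posSemidef_spectralMatrix hA.1 fun _ => Real.sqrt_nonneg _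

lemma psdSqrt_mul_self {A : Matrix n n ℂ} (hA : A.PosSemidef) : psdSqrt hA * psdSqrt hA = A := by
  rw [psdSqrt_eq_spectralMatrix, spectralMatrix_mul]
  convert spectralMatrix_eigenvalues hA.1 using 2
  ext i
  exact Real.mul_self_sqrt (hA.eigenvalues_nonneg i)

open scoped MatrixOrder in
lemma eq_psdSqrt_of_mul_self_eq {A B : Matrix n n ℂ} (hA : A.PosSemidef) (hB : B.PosSemidef)
    (h : B * B = A) : B = psdSqrt hA := by
  have hsqrt : psdSqrt hA = CFC.sqrt A := by
    rw [CFC.sqrt_eq_cfc, cfc_nnreal_eq_real _ A, hA.1.cfc_eq, Matrix.IsHermitian.cfc,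
      psdSqrt_eq_spectralMatrix, spectralMatrix]
    congr 2
    ext i
    simp [max_eq_left (hA.eigenvalues_nonneg i)]
  rw [hsqrt]
  exact (CFC.sqrt_unique h (nonneg_iff_posSemidef.mpr hB)).symm

lemma traceNorm_eq_sum_sqrt (X : Matrix n n ℂ) :
    traceNorm X = ∑ i, √((posSemidef_conjTranspose_mul_self X).1.eigenvalues i) := by
  simp [traceNorm, psdSqrt_eq_spectralMatrix, trace_spectralMatrix]

lemma traceNorm_nonneg (X : Matrix n n ℂ) : 0 ≤ traceNorm X := by
  rw [traceNorm_eq_sum_sqrt]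
  positivity

lemma traceNorm_eq_sum_abs_eigenvalues {H : Matrix n n ℂ} (hH : H.IsHermitian) :
    traceNorm H = ∑ i, |hH.eigenvalues i| := by
  have habs : spectralMatrix hH (fun i => |hH.eigenvalues i|) =
      psdSqrt (posSemidef_conjTranspose_mul_self H) := by
    refine eq_psdSqrt_of_mul_self_eq _ (posSemidef_spectralMatrix hH fun i => abs_nonneg _) ?_
    rw [spectralMatrix_mul, hH.eq]
    conv_rhs => rw [← spectralMatrix_eigenvalues hH]
    rw [spectralMatrix_mul]
    congr 1
    ext i
    exact abs_mul_abs_self _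
  simp [traceNorm, ← habs, trace_spectralMatrix]

/-- In the eigenbasis `V` of `XᴴX` the columns of `X V` have norms `√dᵢ` and those of `C V` have
norm at most `1`; apply Cauchy–Schwarz column by column. -/
lemma IsContraction.re_trace_conjTranspose_mul_le_traceNorm {C : Matrix n n ℂ}
    (hC : IsContraction C) (X : Matrix n n ℂ) : (Cᴴ * X).trace.re ≤ traceNorm X := by
  have hXX := posSemidef_conjTranspose_mul_self X
  set V : Matrix n n ℂ := (hXX.1.eigenvectorUnitary : Matrix n n ℂ)
  have hVV : Vᴴ * V = 1 := Unitary.coe_star_mul_self _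
  have hXV : (X * V)ᴴ * (X * V) = diagonal (RCLike.ofReal ∘ hXX.1.eigenvalues) := by
    rw [← hXX.1.conjStarAlgAut_star_eigenvectorUnitary, Unitary.conjStarAlgAut_star_apply,
      conjTranspose_mul, ← star_eq_conjTranspose V]
    noncomm_ring
  have htrace : (Cᴴ * X).trace = ((C * V)ᴴ * (X * V)).trace := by
    have hVV' : V * Vᴴ = 1 := Unitary.coe_mul_star_self _
    rw [← mul_one (Cᴴ * X), ← hVV', ← mul_assoc, trace_mul_comm, conjTranspose_mul]
    noncomm_ring
  rw [htrace, traceNorm_eq_sum_sqrt, trace, Complex.re_sum]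
  simp only [diag_apply]
  refine Finset.sum_le_sum fun i _ => ?_
  have hCV : (((C * V)ᴴ * (C * V)) i i).re ≤ 1 := by
    simpa [hVV] using hC.re_conjTranspose_mul_self_apply_le V i
  calc (((C * V)ᴴ * (X * V)) i i).re ≤ ‖((C * V)ᴴ * (X * V)) i i‖ := Complex.re_le_norm _
    _ ≤ √(((C * V)ᴴ * (C * V)) i i).re * √(((X * V)ᴴ * (X * V)) i i).re :=
      norm_conjTranspose_mul_apply_le _ _ i i
    _ ≤ 1 * √(hXX.1.eigenvalues i) := by
      gcongr
      · exact Real.sqrt_le_one.mpr hCV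
      · rw [hXV]; simp
    _ = √(hXX.1.eigenvalues i) := one_mul _

lemma abs_re_trace_le_traceNorm (X : Matrix n n ℂ) : |X.trace.re| ≤ traceNorm X := by
  have hone : IsContraction (1 : Matrix n n ℂ) :=
    isContraction_of_conjTranspose_mul_self_eq_one (by simp)
  have hneg : IsContraction (-1 : Matrix n n ℂ) :=
    isContraction_of_conjTranspose_mul_self_eq_one (by simp)
  refine abs_le.mpr ⟨?_, ?_⟩
  · simpa [neg_le] using hneg.re_trace_conjTranspose_mul_le_traceNorm X
  · simpa using hone.re_trace_conjTranspose_mul_le_traceNorm X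

/-- The witness is the partial isometry `X |X|⁺` of the polar decomposition; the junk value
`(√0)⁻¹ = 0` makes `e` below the eigenvalues of the pseudo-inverse `|X|⁺`. -/
lemma exists_isContraction_re_trace_eq_traceNorm (X : Matrix n n ℂ) :
    ∃ C : Matrix n n ℂ, IsContraction C ∧ (Cᴴ * X).trace.re = traceNorm X := by
  have hXX := posSemidef_conjTranspose_mul_self X
  set d := hXX.1.eigenvalues
  set e : n → ℝ := fun i => (√(d i))⁻¹
  have hXX_eq : Xᴴ * X = spectralMatrix hXX.1 d := (spectralMatrix_eigenvalues hXX.1).symm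
  have hCt : (X * spectralMatrix hXX.1 e)ᴴ = spectralMatrix hXX.1 e * Xᴴ := by
    rw [conjTranspose_mul, (isHermitian_spectralMatrix hXX.1 e).eq]
  refine ⟨X * spectralMatrix hXX.1 e, ?_, ?_⟩
  · have hCC : (X * spectralMatrix hXX.1 e)ᴴ * (X * spectralMatrix hXX.1 e) =
        spectralMatrix hXX.1 (e * d * e) := by
      rw [hCt, ← spectralMatrix_mul, ← spectralMatrix_mul, ← hXX_eq]
      noncomm_ring
    rw [IsContraction, hCC, ← spectralMatrix_one hXX.1, spectralMatrix_sub]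
    refine posSemidef_spectralMatrix hXX.1 fun i => ?_
    have hede : e i * d i * e i ≤ 1 :=
      calc e i * d i * e i = d i / (√(d i) * √(d i)) := by simp only [e]; ring
        _ = d i / d i := by rw [Real.mul_self_sqrt (hXX.eigenvalues_nonneg i)]
        _ ≤ 1 := div_self_le_one _
    simpa using hede
  · have hCX : spectralMatrix hXX.1 e * (Xᴴ * X) = spectralMatrix hXX.1 (e * d) := by
      rw [← spectralMatrix_mul]
      exact congrArg (spectralMatrix hXX.1 e * ·) hXX_eq
    rw [hCt, mul_assoc, hCX, trace_spectralMatrix, traceNorm_eq_sum_sqrt]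
    simp [e, d, ← div_eq_inv_mul, Real.div_sqrt]

lemma IsContraction.re_trace_mul_projection_le {A B C M : Matrix n n ℂ} (hC : IsContraction C)
    (hA : A.IsHermitian) (hB : B.IsHermitian) (hM : IsStarProjection M) :
    (Cᴴ * (A * M * B)).trace.re ≤ √(M * (A * A)).trace.re * √(M * (B * B)).trace.re := by
  have hMh : Mᴴ = M := hM.isSelfAdjoint
  have hsplit : (Cᴴ * (A * M * B)).trace = ((C * (B * M))ᴴ * (A * M)).trace := by
    have h : (C * (B * M))ᴴ * (A * M) = M * B * (Cᴴ * A * M) := by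
      rw [conjTranspose_mul, conjTranspose_mul, hB.eq, hMh]
      noncomm_ring
    rw [h, trace_mul_comm (M * B), show Cᴴ * A * M * (M * B) = Cᴴ * (A * (M * M) * B) by
      noncomm_ring, hM.isIdempotentElem.eq]
  have hCB := hC.re_trace_conjTranspose_mul_self_le (B * M)
  rw [trace_conjTranspose_mul_self_of_isStarProjection hM, hB.eq] at hCB
  calc (Cᴴ * (A * M * B)).trace.re ≤ ‖((C * (B * M))ᴴ * (A * M)).trace‖ :=
        hsplit ▸ Complex.re_le_norm _
    _ ≤ √((C * (B * M))ᴴ * (C * (B * M))).trace.re * √((A * M)ᴴ * (A * M)).trace.re :=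
      norm_trace_conjTranspose_mul_le _ _
    _ ≤ √(M * (B * B)).trace.re * √(M * (A * A)).trace.re := by
      rw [trace_conjTranspose_mul_self_of_isStarProjection hM, hA.eq]
      gcongr
    _ = √(M * (A * A)).trace.re * √(M * (B * B)).trace.re := mul_comm _ _

lemma msqrt_eq_psdSqrt {ρ : Matrix n n ℂ} (hρ : ρ.PosSemidef) : msqrt ρ = psdSqrt hρ :=
  dif_pos hρ

/-- Monotonicity of the fidelity under the two-outcome measurement `{M, 1 - M}`. -/
lemma fidelity_le_of_isStarProjection {ρ σ M : Matrix n n ℂ} (hρ : ρ.PosSemidef)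
    (hσ : σ.PosSemidef) (hM : IsStarProjection M) :
    fidelity ρ σ ≤ √(M * ρ).trace.re * √(M * σ).trace.re +
      √((1 - M) * ρ).trace.re * √((1 - M) * σ).trace.re := by
  obtain ⟨C, hC, hCX⟩ := exists_isContraction_re_trace_eq_traceNorm (msqrt ρ * msqrt σ)
  have hA := (posSemidef_psdSqrt hρ).1
  have hB := (posSemidef_psdSqrt hσ).1
  rw [msqrt_eq_psdSqrt hρ, msqrt_eq_psdSqrt hσ] at hCX
  have hsplit : Cᴴ * (psdSqrt hρ * psdSqrt hσ) =
      Cᴴ * (psdSqrt hρ * M * psdSqrt hσ) + Cᴴ * (psdSqrt hρ * (1 - M) * psdSqrt hσ) := by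
    noncomm_ring
  have h₁ := hC.re_trace_mul_projection_le hA hB hM
  have h₂ := hC.re_trace_mul_projection_le hA hB hM.one_sub
  rw [psdSqrt_mul_self, psdSqrt_mul_self] at h₁ h₂
  rw [fidelity, msqrt_eq_psdSqrt hρ, msqrt_eq_psdSqrt hσ, ← hCX, hsplit, trace_add, Complex.add_re]
  exact add_le_add h₁ h₂

/-- In the eigenbasis of `A - B`, the diagonal entries `aᵢ, bᵢ ≥ 0` of `A, B` satisfy
`aᵢ - bᵢ = μᵢ`, hence `μᵢ² ≤ |μᵢ| (aᵢ + bᵢ)`. -/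
lemma re_trace_sub_mul_sub_le_re_trace_abs_mul_add {A B : Matrix n n ℂ} (hA : A.PosSemidef)
    (hB : B.PosSemidef) :
    ((A - B) * (A - B)).trace.re ≤
      (spectralMatrix (hA.1.sub hB.1) (|(hA.1.sub hB.1).eigenvalues ·|) * (A + B)).trace.re := by
  set hΔ := hA.1.sub hB.1
  set μ := hΔ.eigenvalues
  set V : Matrix n n ℂ := (hΔ.eigenvectorUnitary : Matrix n n ℂ)
  have hdiag {K : Matrix n n ℂ} (hK : K.PosSemidef) (i : n) : 0 ≤ ((star V * K * V) i i).re := by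
    have hVKV : (star V * K * V).PosSemidef :=
      star_eq_conjTranspose V ▸ hK.conjTranspose_mul_mul_same V
    simpa using (Complex.le_def.mp (hVKV.diag_nonneg (i := i))).1
  have hμ (i : n) : ((star V * A * V) i i).re - ((star V * B * V) i i).re = μ i := by
    have hconj : star V * (A - B) * V = diagonal (RCLike.ofReal ∘ μ) := by
      simpa [Unitary.conjStarAlgAut_star_apply] using hΔ.conjStarAlgAut_star_eigenvectorUnitary
    rw [← Complex.sub_re, ← Matrix.sub_apply, ← sub_mul, ← mul_sub, hconj]
    simp
  have hsq : (A - B) * (A - B) = spectralMatrix hΔ (μ * μ) := by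
    rw [← spectralMatrix_mul, spectralMatrix_eigenvalues]
  rw [hsq, trace_spectralMatrix, trace_spectralMatrix_mul, Complex.re_sum, Complex.re_sum]
  refine Finset.sum_le_sum fun i _ => ?_
  have hμab : |μ i| ≤ ((star V * A * V) i i).re + ((star V * B * V) i i).re :=
    abs_le.mpr ⟨by linarith [hdiag hA i, hμ i], by linarith [hdiag hB i, hμ i]⟩
  calc (((μ * μ) i : ℝ) : ℂ).re = |μ i| * |μ i| := by simp
    _ ≤ |μ i| * (((star V * A * V) i i).re + ((star V * B * V) i i).re) := by gcongr
    _ = (((|μ i| : ℝ) : ℂ) * (star V * (A + B) * V) i i).re := by simp [mul_add, add_mul]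

/-- The Powers–Størmer inequality `‖A - B‖₂² ≤ ‖A² - B²‖₁`, tested against the symmetry
`G = sign (A - B)`, which satisfies `G (A - B) = (A - B) G = |A - B|`. -/
lemma re_trace_sub_mul_sub_le_traceNorm {A B : Matrix n n ℂ} (hA : A.PosSemidef)
    (hB : B.PosSemidef) : ((A - B) * (A - B)).trace.re ≤ traceNorm (A * A - B * B) := by
  set hΔ := hA.1.sub hB.1
  set μ := hΔ.eigenvalues
  set s : n → ℝ := fun i => if 0 ≤ μ i then 1 else -1
  set G := spectralMatrix hΔ s
  set R := spectralMatrix hΔ (|μ ·|)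
  have hs : s * s = 1 := by
    ext i; simp only [s, Pi.mul_apply]; split_ifs <;> norm_num
  have hsμ : s * μ = (|μ ·|) := by
    ext i; simp only [s, Pi.mul_apply]; split_ifs with h
    · simp [abs_of_nonneg h]
    · simp [abs_of_neg (not_le.mp h)]
  have hG : Gᴴ = G := isHermitian_spectralMatrix hΔ s
  have hGΔ : G * (A - B) = R := by
    conv_lhs => arg 2; rw [← spectralMatrix_eigenvalues hΔ]
    rw [spectralMatrix_mul, hsμ]
  have hΔG : (A - B) * G = R := by
    conv_lhs => arg 1; rw [← spectralMatrix_eigenvalues hΔ]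
    rw [spectralMatrix_mul, mul_comm, hsμ]
  have hcontr : IsContraction G := isContraction_of_conjTranspose_mul_self_eq_one <| by
    rw [hG, spectralMatrix_mul, hs, spectralMatrix_one]
  have htwice : (Gᴴ * (A * A - B * B)).trace + (Gᴴ * (A * A - B * B)).trace =
      (R * (A + B)).trace + (R * (A + B)).trace := by
    rw [hG, ← trace_add, show G * (A * A - B * B) + G * (A * A - B * B) =
      G * (A - B) * (A + B) + G * (A + B) * (A - B) by noncomm_ring, trace_add,
      trace_mul_cycle G (A + B), hGΔ, hΔG]
  have hre := congrArg Complex.re htwice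
  simp only [Complex.add_re] at hre
  linarith [hcontr.re_trace_conjTranspose_mul_le_traceNorm (A * A - B * B),
    re_trace_sub_mul_sub_le_re_trace_abs_mul_add hA hB]

def posProj {H : Matrix n n ℂ} (hH : H.IsHermitian) : Matrix n n ℂ :=
  spectralMatrix hH fun i => if 0 ≤ hH.eigenvalues i then 1 else 0

lemma isStarProjection_posProj {H : Matrix n n ℂ} (hH : H.IsHermitian) :
    IsStarProjection (posProj hH) where
  isIdempotentElem := by
    rw [IsIdempotentElem, posProj, spectralMatrix_mul]
    congr 1
    ext i
    simp only [Pi.mul_apply]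
    split_ifs <;> norm_num
  isSelfAdjoint := isHermitian_spectralMatrix hH _

lemma re_trace_posProj_mul {H : Matrix n n ℂ} (hH : H.IsHermitian) :
    (posProj hH * H).trace.re = (traceNorm H + H.trace.re) / 2 := by
  have h : posProj hH * spectralMatrix hH hH.eigenvalues =
      spectralMatrix hH fun i => (|hH.eigenvalues i| + hH.eigenvalues i) / 2 := by
    rw [posProj, spectralMatrix_mul]
    congr 1
    ext i
    simp only [Pi.mul_apply]
    split_ifs with hi
    · simp [abs_of_nonneg hi]
    · simp [abs_of_neg (not_le.mp hi)]
  rw [spectralMatrix_eigenvalues] at h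
  rw [h, trace_spectralMatrix, traceNorm_eq_sum_abs_eigenvalues hH, hH.trace_eq_sum_eigenvalues]
  simp only [Complex.re_sum, Complex.ofReal_re]
  rw [← Finset.sum_div, Finset.sum_add_distrib]
  simp

def genTraceDist (ρ σ : Matrix n n ℂ) : ℝ :=
  (traceNorm (ρ - σ) + |ρ.trace.re - σ.trace.re|) / 2

lemma genFid_nonneg (ρ σ : Matrix n n ℂ) : 0 ≤ genFid ρ σ :=
  add_nonneg (traceNorm_nonneg _) (Real.sqrt_nonneg _)

lemma genFid_sq_add_genTraceDist_sq_le_one {ρ σ : Matrix n n ℂ} (hρ : IsSubnormalized ρ)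
    (hσ : IsSubnormalized σ) : genFid ρ σ ^ 2 + genTraceDist ρ σ ^ 2 ≤ 1 := by
  obtain ⟨hρ, ha⟩ := hρ
  obtain ⟨hσ, hb⟩ := hσ
  set P := posProj (hρ.1.sub hσ.1)
  have hP := isStarProjection_posProj (hρ.1.sub hσ.1)
  have hPρ := re_trace_mul_nonneg_of_isStarProjection hP hρ
  have hPσ := re_trace_mul_nonneg_of_isStarProjection hP hσ
  have hQρ := re_trace_mul_nonneg_of_isStarProjection hP.one_sub hρ
  have hQσ := re_trace_mul_nonneg_of_isStarProjection hP.one_sub hσ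
  have hdiff := re_trace_posProj_mul (hρ.1.sub hσ.1)
  have htr := abs_re_trace_le_traceNorm (ρ - σ)
  simp only [sub_mul, mul_sub, one_mul, trace_sub, Complex.sub_re] at hQρ hQσ hdiff htr
  have hcl := sq_sum_sqrt_mul_sqrt_add_sq_le_one
    (p := ![(P * ρ).trace.re, ρ.trace.re - (P * ρ).trace.re, 1 - ρ.trace.re])
    (q := ![(P * σ).trace.re, σ.trace.re - (P * σ).trace.re, 1 - σ.trace.re])
    (fun i => by fin_cases i <;> simp <;> linarith) (fun i => by fin_cases i <;> simp <;> linarith)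
    (by simp [Fin.sum_univ_three]) (by simp [Fin.sum_univ_three])
  have hF := fidelity_le_of_isStarProjection hρ hσ hP
  simp only [Fin.sum_univ_three, Matrix.cons_val] at hcl
  simp only [sub_mul, one_mul, trace_sub, Complex.sub_re] at hF
  set p := (P * ρ).trace.re
  set q := (P * σ).trace.re
  set t := ρ.trace.re - σ.trace.re
  have hD : genTraceDist ρ σ = (|p - q| + |ρ.trace.re - p - (σ.trace.re - q)| +
      |1 - ρ.trace.re - (1 - σ.trace.re)|) / 2 := by
    rw [genTraceDist, abs_of_nonneg (show 0 ≤ p - q by linarith [abs_le.mp htr]),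
      abs_of_nonpos (show ρ.trace.re - p - (σ.trace.re - q) ≤ 0 by linarith [abs_le.mp htr]),
      show 1 - ρ.trace.re - (1 - σ.trace.re) = -t by ring, abs_neg]
    linarith
  have hgen : genFid ρ σ ≤ √p * √q + √(ρ.trace.re - p) * √(σ.trace.re - q) +
      √(1 - ρ.trace.re) * √(1 - σ.trace.re) := by
    rw [genFid, Real.sqrt_mul (by linarith)]
    linarith
  rw [hD]
  exact le_trans (add_le_add_left (pow_le_pow_left₀ (genFid_nonneg ρ σ) hgen 2) _) hcl

lemma one_sub_genTraceDist_le_genFid {ρ σ : Matrix n n ℂ} (hρ : IsSubnormalized ρ)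
    (hσ : IsSubnormalized σ) : 1 - genTraceDist ρ σ ≤ genFid ρ σ := by
  obtain ⟨hρ, ha⟩ := hρ
  obtain ⟨hσ, hb⟩ := hσ
  set A := psdSqrt hρ
  set B := psdSqrt hσ
  have hPS := re_trace_sub_mul_sub_le_traceNorm (posSemidef_psdSqrt hρ) (posSemidef_psdSqrt hσ)
  have hexpand : (A - B) * (A - B) = A * A + B * B - (A * B + B * A) := by noncomm_ring
  rw [hexpand, psdSqrt_mul_self, psdSqrt_mul_self, trace_sub, trace_add, trace_add,
    trace_mul_comm B A] at hPS
  simp only [Complex.sub_re, Complex.add_re] at hPS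
  have hAB : (A * B).trace.re ≤ fidelity ρ σ := by
    rw [fidelity, msqrt_eq_psdSqrt hρ, msqrt_eq_psdSqrt hσ]
    exact (le_abs_self _).trans (abs_re_trace_le_traceNorm _)
  have hmin := min_le_sqrt_mul (sub_nonneg.mpr ha) (sub_nonneg.mpr hb)
  have hmin_eq := min_add_max (1 - ρ.trace.re) (1 - σ.trace.re)
  have hmax_sub := max_sub_min_eq_abs' (1 - ρ.trace.re) (1 - σ.trace.re)
  rw [show 1 - ρ.trace.re - (1 - σ.trace.re) = -(ρ.trace.re - σ.trace.re) by ring, abs_neg]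
    at hmax_sub
  rw [genFid, genTraceDist]
  linarith

end

/-- Lower and upper bounds on the purified distance in terms of the trace distance. -/
theorem trace_dist_le_purifiedDist_le (ρ σ : Matrix ι ι ℂ)
    (hρ : IsSubnormalized ρ) (hσ : IsSubnormalized σ) :
    (1 / 2) * traceNorm (ρ - σ) ≤ purifiedDist ρ σ ∧
      purifiedDist ρ σ ≤ Real.sqrt (traceNorm (ρ - σ) + |ρ.trace.re - σ.trace.re|) := by
  have hfvdg := genFid_sq_add_genTraceDist_sq_le_one hρ hσ
  have hps := one_sub_genTraceDist_le_genFid hρ hσ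
  have hnonneg := genFid_nonneg ρ σ
  have hD : traceNorm (ρ - σ) + |ρ.trace.re - σ.trace.re| = 2 * genTraceDist ρ σ := by
    rw [genTraceDist]; ring
  have hT : (1 / 2) * traceNorm (ρ - σ) ≤ genTraceDist ρ σ := by
    rw [genTraceDist]; linarith [abs_nonneg (ρ.trace.re - σ.trace.re)]
  rw [purifiedDist, hD]
  constructor
  · exact hT.trans (Real.le_sqrt_of_sq_le (by linarith))
  · exact Real.sqrt_le_sqrt (by nlinarith)

end QIT
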